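/- arXiv:1309.7198 — 7 statements merged into one kernel-verified Lean document; each statement's English description precedes it below -/
import Mathlib

section
/- (Structure of SBMOD solutions, Lemma 1.) Suppose there exist an (n+2)×(k+2) Boolean matrix Ē and a (k+2)×(m+2) Boolean matrix P̄ with S̄ = Ē·P̄. Then there also exist matrices Ē', P̄' of the same dimensions with S̄ = Ē'·P̄' which are in normal form, i.e.: every entry of row 1 of Ē' is true; row 2 of Ē' is (true, false, …, false); Ē' i 2 = false for all rows i ≥ 3; row 1 of P̄' is (true, false, …, false); every entry of column 1 of P̄' is true; and P̄' 2 2 = true. -/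
/-- Boolean matrix product: `(bmul E P) i j = true` iff there exists `a`
with `E i a = true` and `P a j = true`. -/
def bmul {n k m : ℕ} (E : Fin n → Fin k → Bool) (P : Fin k → Fin m → Bool) :
    Fin n → Fin m → Bool :=
  fun i j => decide (∃ a : Fin k, E i a = true ∧ P a j = true)

/-- Structure of SBMOD solutions (Lemma 1).  Here `Sbar` is the bordered matrix of `S`
(0-based indexing: row/column `0` is the all-true border row/column, row/column `1` is
the border row/column that is false except for its first entry, and the bottom-right
`n×m` block is `S`).  If `Sbar = Ē·P̄` for some Boolean matrices of the indicated sizes,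
then there is also a factorization `Sbar = Ē'·P̄'` in normal form: row `0` of `Ē'` is
all true; row `1` of `Ē'` is `(true, false, …, false)`; `Ē' i 1 = false` for all rows
`i ≥ 2`; row `0` of `P̄'` is `(true, false, …, false)`; column `0` of `P̄'` is all true;
and `P̄' 1 1 = true`. -/
theorem sbmod_normal_form {n m k : ℕ} (S : Fin n → Fin m → Bool)
    (Sbar : Fin (n + 2) → Fin (m + 2) → Bool)
    (hb1 : ∀ j, Sbar 0 j = true)
    (hb2 : ∀ i, Sbar i 0 = true)
    (hb3 : ∀ j : Fin (m + 2), 1 ≤ (j : ℕ) → Sbar 1 j = false)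
    (hb4 : ∀ i : Fin (n + 2), 1 ≤ (i : ℕ) → Sbar i 1 = false)
    (hb5 : ∀ (i : Fin n) (j : Fin m), Sbar i.succ.succ j.succ.succ = S i j)
    (Ebar : Fin (n + 2) → Fin (k + 2) → Bool)
    (Pbar : Fin (k + 2) → Fin (m + 2) → Bool)
    (hfac : Sbar = bmul Ebar Pbar) :
    ∃ (Ebar' : Fin (n + 2) → Fin (k + 2) → Bool)
      (Pbar' : Fin (k + 2) → Fin (m + 2) → Bool),
      Sbar = bmul Ebar' Pbar' ∧
      (∀ a, Ebar' 0 a = true) ∧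
      (Ebar' 1 0 = true ∧ ∀ a : Fin (k + 2), 1 ≤ (a : ℕ) → Ebar' 1 a = false) ∧
      (∀ i : Fin (n + 2), 2 ≤ (i : ℕ) → Ebar' i 1 = false) ∧
      (Pbar' 0 0 = true ∧ ∀ j : Fin (m + 2), 1 ≤ (j : ℕ) → Pbar' 0 j = false) ∧
      (∀ a, Pbar' a 0 = true) ∧
      Pbar' 1 1 = true := by
  have hfac' : ∀ i j, Sbar i j = true ↔ ∃ c, Ebar i c = true ∧ Pbar c j = true := by
    intro i j; rw [hfac]; simp [bmul]
  have hone_m : (1 : ℕ) ≤ ((1 : Fin (m + 2)) : ℕ) := by simp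
  have hone_n : (1 : ℕ) ≤ ((1 : Fin (n + 2)) : ℕ) := by simp
  obtain ⟨a, ha1, ha0⟩ := (hfac' 1 0).mp (hb2 1)
  obtain ⟨b, hbE0, hbP1⟩ := (hfac' 0 1).mp (hb1 1)
  have haP : ∀ j : Fin (m + 2), 1 ≤ (j : ℕ) → Pbar a j = false := by
    intro j hj
    by_contra h
    have h' : Pbar a j = true := by simpa using h
    have : Sbar 1 j = true := (hfac' 1 j).mpr ⟨a, ha1, h'⟩
    rw [hb3 j hj] at this; exact Bool.noConfusion this
  have hbE : ∀ i : Fin (n + 2), 1 ≤ (i : ℕ) → Ebar i b = false := by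
    intro i hi
    by_contra h
    have h' : Ebar i b = true := by simpa using h
    have : Sbar i 1 = true := (hfac' i 1).mpr ⟨b, h', hbP1⟩
    rw [hb4 i hi] at this; exact Bool.noConfusion this
  have hab : a ≠ b := by
    intro h
    have := haP 1 hone_m
    rw [h, hbP1] at this; exact Bool.noConfusion this
  have h01k : (0 : Fin (k + 2)) ≠ 1 := by
    intro h; simpa using congrArg Fin.val h
  set τ : Equiv.Perm (Fin (k + 2)) := Equiv.swap 0 a with hτ
  set b' : Fin (k + 2) := τ.symm b with hb'
  have hb'ne0 : b' ≠ 0 := by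
    intro h
    apply hab
    have : τ b' = b := by simp [hb']
    rw [h] at this
    simpa [hτ, Equiv.swap_apply_left] using this
  set σ : Equiv.Perm (Fin (k + 2)) := (Equiv.swap 1 b').trans τ with hσ
  have hσ0 : σ 0 = a := by
    have h1 : (Equiv.swap 1 b') 0 = 0 :=
      Equiv.swap_apply_of_ne_of_ne h01k (Ne.symm hb'ne0)
    simp [hσ, h1, hτ, Equiv.swap_apply_left]
  have hσ1 : σ 1 = b := by
    simp [hσ, Equiv.swap_apply_left, hb']
  -- definitions
  set E' : Fin (n + 2) → Fin (k + 2) → Bool := fun i c =>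
    if i = 0 then true else if i = 1 then decide (c = 0) else Ebar i (σ c) with hE'
  set P' : Fin (k + 2) → Fin (m + 2) → Bool := fun c j =>
    if j = 0 then true else Pbar (σ c) j with hP'
  have h01n : (1 : Fin (n + 2)) ≠ 0 := by
    intro h; simpa using congrArg Fin.val h
  have hiField : ∀ i : Fin (n + 2), i ≠ 0 → i ≠ 1 → 2 ≤ (i : ℕ) := by
    intro i h0 h1
    have v0 : (i : ℕ) ≠ 0 := fun h => h0 (by apply Fin.ext; simpa using h)
    have v1 : (i : ℕ) ≠ 1 := fun h => h1 (by apply Fin.ext; simpa using h)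
    omega
  have hjpos : ∀ j : Fin (m + 2), j ≠ 0 → 1 ≤ (j : ℕ) := by
    intro j h0
    have v0 : (j : ℕ) ≠ 0 := fun h => h0 (by apply Fin.ext; simpa using h)
    omega
  refine ⟨E', P', ?_, ?_, ⟨?_, ?_⟩, ?_, ⟨?_, ?_⟩, ?_, ?_⟩
  · -- main factorization
    funext i j
    have key : Sbar i j = true ↔ ∃ c, E' i c = true ∧ P' c j = true := by
      by_cases hi0 : i = 0
      · subst hi0
        simp only [hE', hP', if_pos rfl]
        constructor
        · intro _
          by_cases hj0 : j = 0
          · exact ⟨0, by simp, by simp [hj0]⟩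
          · obtain ⟨c, _, hc2⟩ := (hfac' 0 j).mp (hb1 j)
            exact ⟨σ.symm c, by simp, by simp [hj0, Equiv.apply_symm_apply, hc2]⟩
        · intro _; exact hb1 j
      · by_cases hi1 : i = 1
        · subst hi1
          have hred : ∀ c : Fin (k + 2), E' 1 c = true ↔ c = 0 := by
            intro c; simp [hE', h01n]
          by_cases hj0 : j = 0
          · subst hj0
            constructor
            · intro _; exact ⟨0, (hred 0).mpr rfl, by simp [hP']⟩
            · intro _; exact hb2 1
          · have hj1 : 1 ≤ (j : ℕ) := hjpos j hj0
            rw [hb3 j hj1]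
            constructor
            · intro h; exact Bool.noConfusion h
            · rintro ⟨c, hc1, hc2⟩
              rw [hred] at hc1
              subst hc1
              rw [hP'] at hc2
              simp only [if_neg hj0] at hc2
              rw [hσ0] at hc2
              rw [haP j hj1] at hc2
              exact Bool.noConfusion hc2
        · have hi2 : 2 ≤ (i : ℕ) := hiField i hi0 hi1
          have hEred : ∀ c : Fin (k + 2), E' i c = Ebar i (σ c) := by
            intro c; simp [hE', hi0, hi1]
          by_cases hj0 : j = 0
          · subst hj0
            rw [hb2 i]
            simp only [true_iff]
            obtain ⟨c, hc1, _⟩ := (hfac' i 0).mp (hb2 i)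
            exact ⟨σ.symm c, by rw [hEred]; simpa using hc1, by simp [hP']⟩
          · have hj1 : 1 ≤ (j : ℕ) := hjpos j hj0
            rw [hfac' i j]
            constructor
            · rintro ⟨c, hc1, hc2⟩
              exact ⟨σ.symm c, by rw [hEred]; simpa using hc1,
                by simp [hP', hj0, Equiv.apply_symm_apply, hc2]⟩
            · rintro ⟨c, hc1, hc2⟩
              rw [hEred] at hc1
              rw [hP'] at hc2
              simp only [if_neg hj0] at hc2
              exact ⟨σ c, hc1, hc2⟩
    show Sbar i j = bmul E' P' i j
    unfold bmul
    rcases h : Sbar i j with _ | _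
    · rw [h] at key
      symm
      rw [decide_eq_false_iff_not]
      intro hex
      exact Bool.noConfusion (key.mpr hex)
    · rw [h] at key
      symm
      rw [decide_eq_true_eq]
      exact key.mp rfl
  · intro c; simp [hE']
  · simp [hE', h01n]
  · intro c hc
    have hc0 : c ≠ 0 := by
      intro h; rw [h] at hc; simpa using hc
    simp [hE', h01n, hc0]
  · intro i hi
    have hi0 : i ≠ 0 := by
      intro h; rw [h] at hi; simpa using hi
    have hi1 : i ≠ 1 := by
      intro h; rw [h] at hi; simp at hi
    simp only [hE', if_neg hi0, if_neg hi1, hσ1]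
    exact hbE i (by omega)
  · simp [hP']
  · intro j hj
    have hj0 : j ≠ 0 := by
      intro h; rw [h] at hj; simpa using hj
    simp only [hP', if_neg hj0, hσ0]
    exact haP j hj
  · intro c; simp [hP']
  · have h1m : (1 : Fin (m + 2)) ≠ 0 := by
      intro h; simpa using congrArg Fin.val h
    simp only [hP', if_neg h1m, hσ1]
    exact hbP1
end

section
/- (Correctness of the SB-to-SBMOD reduction, Lemma 2.) Let S be an n×m Boolean matrix and k a positive integer. There exist an (n+2)×(k+2) Boolean matrix Ē and a (k+2)×(m+2) Boolean matrix P̄ with S̄ = Ē·P̄ if and only if there exist an n×k Boolean matrix E and a k×m Boolean matrix P with S = E·P. -/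
/-! Write `S̄ = Ē·P̄`. A witness `c₀` for the entry `(1, 0)` of `S̄` has its row of `P̄`
vanishing off column `0` (row `1` of `S̄` does), and a witness `c₁` for the entry `(0, 1)` has
its column of `Ē` vanishing off row `0`. Hence `c₀ ≠ c₁`, and every witness for an entry of the
inner block avoids both, so the remaining `k` inner indices factor `S`. Conversely, bordering
both factors of `S = E·P` and swapping the first two rows of the right one factors `S̄`. -/

section
variable {n k l m : ℕ}

theorem bmul_eq_true_iff {E : Fin n → Fin k → Bool} {P : Fin k → Fin m → Bool} {i : Fin n}
    {j : Fin m} : bmul E P i j = true ↔ ∃ a, E i a = true ∧ P a j = true :=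
  decide_eq_true_iff

theorem bmul_eq_false_iff {E : Fin n → Fin k → Bool} {P : Fin k → Fin m → Bool} {i : Fin n}
    {j : Fin m} : bmul E P i j = false ↔ ∀ a, E i a = true → P a j = false := by
  simp [bmul]

theorem bmul_comp_eq_of_forall_mem_range (E : Fin n → Fin l → Bool) (P : Fin l → Fin m → Bool)
    (g : Fin k → Fin l) (h : ∀ i j a, E i a = true → P a j = true → a ∈ Set.range g) :
    bmul (fun i b => E i (g b)) (fun b j => P (g b) j) = bmul E P := by
  funext i j
  refine decide_eq_decide.2 ⟨fun ⟨b, hE, hP⟩ => ⟨g b, hE, hP⟩, fun ⟨a, hE, hP⟩ => ?_⟩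
  obtain ⟨b, rfl⟩ := h i j a hE hP
  exact ⟨b, hE, hP⟩

/-- The bordered matrix `S̄`, indexed from `0`: row and column `0` are the all-true border,
row and column `1` the border that is false off its first entry. -/
def border (S : Fin n → Fin m → Bool) : Fin (n + 2) → Fin (m + 2) → Bool :=
  Fin.cases (fun _ => true) <| Fin.cases (Fin.cases true fun _ => false) fun i =>
    Fin.cases true <| Fin.cases false (S i)

section border
variable (S : Fin n → Fin m → Bool)

@[simp] theorem border_zero_left (j : Fin (m + 2)) : border S 0 j = true := rfl

@[simp] theorem border_zero_right (i : Fin (n + 2)) : border S i 0 = true := by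
  rcases i with ⟨_ | _ | _, _⟩ <;> rfl

@[simp] theorem border_one_succ (j : Fin (m + 1)) : border S 1 j.succ = false := rfl

@[simp] theorem border_one_one : border S 1 1 = false := rfl

@[simp] theorem border_succ_succ_one (i : Fin n) : border S i.succ.succ 1 = false := rfl

@[simp] theorem border_succ_succ (i : Fin n) (j : Fin m) :
    border S i.succ.succ j.succ.succ = S i j := rfl

theorem eq_border {Sbar : Fin (n + 2) → Fin (m + 2) → Bool}
    (hb1 : ∀ j, Sbar 0 j = true)
    (hb2 : ∀ i, Sbar i 0 = true)
    (hb3 : ∀ j : Fin (m + 2), 1 ≤ (j : ℕ) → Sbar 1 j = false)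
    (hb4 : ∀ i : Fin (n + 2), 1 ≤ (i : ℕ) → Sbar i 1 = false)
    (hb5 : ∀ (i : Fin n) (j : Fin m), Sbar i.succ.succ j.succ.succ = S i j) :
    Sbar = border S := by
  funext i j
  induction i using Fin.cases with
  | zero => simp [hb1]
  | succ i => induction j using Fin.cases with
    | zero => simp [hb2]
    | succ j => induction i using Fin.cases with
      | zero => simpa using hb3 j.succ (by simp)
      | succ i => induction j using Fin.cases with
        | zero => simpa using hb4 i.succ.succ (by simp)
        | succ j => simp [hb5]

end border

@[simp] theorem Fin.swap_zero_one_succ_succ (c : Fin k) :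
    Equiv.swap (0 : Fin (k + 2)) 1 c.succ.succ = c.succ.succ :=
  Equiv.swap_apply_of_ne_of_ne (Fin.succ_ne_zero _) (by simp [Fin.ext_iff])

/-- Column `0` of `border E` is all true and meets row `1` of `border P`, which is the first
unit vector; column `1` of `border E` is the first unit vector and meets the all-true row `0`. -/
theorem bmul_border_border_swap (E : Fin n → Fin k → Bool) (P : Fin k → Fin m → Bool) :
    bmul (border E) (border P ∘ Equiv.swap 0 1) = border (bmul E P) := by
  funext i j
  induction i using Fin.cases with
  | zero => simp [bmul, Fin.exists_fin_succ]
  | succ i => induction i using Fin.cases with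
    | zero => induction j using Fin.cases <;> simp [bmul, Fin.exists_fin_succ]
    | succ i => induction j using Fin.cases with
      | zero => simp [bmul, Fin.exists_fin_succ]
      | succ j => induction j using Fin.cases <;> simp [bmul, Fin.exists_fin_succ]

theorem exists_bmul_eq_of_border_eq_bmul {S : Fin n → Fin m → Bool}
    {E : Fin (n + 2) → Fin (k + 2) → Bool} {P : Fin (k + 2) → Fin (m + 2) → Bool}
    (h : border S = bmul E P) :
    ∃ (E' : Fin n → Fin k → Bool) (P' : Fin k → Fin m → Bool), S = bmul E' P' := by
  obtain ⟨c₀, hE₀, -⟩ := bmul_eq_true_iff.1 (h ▸ border_zero_right S 1)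
  obtain ⟨c₁, -, hP₁⟩ := bmul_eq_true_iff.1 (h ▸ border_zero_left S 1)
  have hP₀ : ∀ j : Fin (m + 1), P c₀ j.succ = false := fun j =>
    bmul_eq_false_iff.1 (h ▸ border_one_succ S j) c₀ hE₀
  have hE₁ : ∀ i : Fin n, E i.succ.succ c₁ = false := fun i => by
    cases hE : E i.succ.succ c₁
    · rfl
    · have := bmul_eq_false_iff.1 (h ▸ border_succ_succ_one S i) c₁ hE
      rwa [hP₁] at this
  have hne : c₀ ≠ c₁ := by
    rintro rfl
    simpa [hP₁] using hP₀ 0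
  have hcard : ({c₀, c₁}ᶜ : Finset (Fin (k + 2))).card = k := by
    rw [Finset.card_compl, Finset.card_pair hne, Fintype.card_fin, Nat.add_sub_cancel]
  have hS : S = bmul (fun i c => E i.succ.succ c) (fun c j => P c j.succ.succ) := by
    funext i j
    rw [← border_succ_succ S i j, h]
    rfl
  rw [hS, ← bmul_comp_eq_of_forall_mem_range _ _ (Finset.orderEmbOfFin _ hcard)]
  · exact ⟨_, _, rfl⟩
  intro i j a hE hP
  rw [Finset.range_orderEmbOfFin, Finset.coe_compl, Set.mem_compl_iff, Finset.coe_pair]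
  rintro (rfl | rfl)
  · simp [hP₀] at hP
  · simp [hE₁] at hE

end

theorem sb_iff_sbmod_general {n m k : ℕ} (S : Fin n → Fin m → Bool)
    (Sbar : Fin (n + 2) → Fin (m + 2) → Bool)
    (hb1 : ∀ j, Sbar 0 j = true)
    (hb2 : ∀ i, Sbar i 0 = true)
    (hb3 : ∀ j : Fin (m + 2), 1 ≤ (j : ℕ) → Sbar 1 j = false)
    (hb4 : ∀ i : Fin (n + 2), 1 ≤ (i : ℕ) → Sbar i 1 = false)
    (hb5 : ∀ (i : Fin n) (j : Fin m), Sbar i.succ.succ j.succ.succ = S i j) :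
    (∃ (Ebar : Fin (n + 2) → Fin (k + 2) → Bool)
       (Pbar : Fin (k + 2) → Fin (m + 2) → Bool), Sbar = bmul Ebar Pbar) ↔
    (∃ (E : Fin n → Fin k → Bool) (P : Fin k → Fin m → Bool), S = bmul E P) := by
  obtain rfl := eq_border S hb1 hb2 hb3 hb4 hb5
  refine ⟨fun ⟨_, _, h⟩ => exists_bmul_eq_of_border_eq_bmul h, fun ⟨E, P, h⟩ => ?_⟩
  exact ⟨border E, border P ∘ Equiv.swap 0 1, by rw [bmul_border_border_swap, h]⟩

/-- Correctness of the SB-to-SBMOD reduction (Lemma 2).  Here `Sbar` is the bordered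
matrix of `S` (0-based indexing: row/column `0` is the all-true border row/column,
row/column `1` is the border row/column that is false except for its first entry, and
the bottom-right `n×m` block is `S`).  The bordered matrix `Sbar` admits a Boolean
factorization into an `(n+2)×(k+2)` and a `(k+2)×(m+2)` matrix iff `S` admits a
Boolean factorization into an `n×k` and a `k×m` matrix. -/
theorem sb_iff_sbmod {n m k : ℕ} (hk : 0 < k) (S : Fin n → Fin m → Bool)
    (Sbar : Fin (n + 2) → Fin (m + 2) → Bool)
    (hb1 : ∀ j, Sbar 0 j = true)
    (hb2 : ∀ i, Sbar i 0 = true)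
    (hb3 : ∀ j : Fin (m + 2), 1 ≤ (j : ℕ) → Sbar 1 j = false)
    (hb4 : ∀ i : Fin (n + 2), 1 ≤ (i : ℕ) → Sbar i 1 = false)
    (hb5 : ∀ (i : Fin n) (j : Fin m), Sbar i.succ.succ j.succ.succ = S i j) :
    (∃ (Ebar : Fin (n + 2) → Fin (k + 2) → Bool)
       (Pbar : Fin (k + 2) → Fin (m + 2) → Bool), Sbar = bmul Ebar Pbar) ↔
    (∃ (E : Fin n → Fin k → Bool) (P : Fin k → Fin m → Bool), S = bmul E P) :=
  sb_iff_sbmod_general S Sbar hb1 hb2 hb3 hb4 hb5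
end

section
/- (Block computation for the forward direction of Lemma 2.) Let S be an n×m Boolean matrix and suppose S̄ = Ē·P̄ where the (n+2)×(k+2) matrix Ē and the (k+2)×(m+2) matrix P̄ are in normal form, i.e.: every entry of row 1 of Ē is true; row 2 of Ē is (true, false, …, false); Ē i 2 = false for all i ≥ 3; row 1 of P̄ is (true, false, …, false); every entry of column 1 of P̄ is true; and P̄ 2 2 = true. Then the bottom-right blocks E (with E i a = Ē (i+2) (a+2) for 1 ≤ i ≤ n, 1 ≤ a ≤ k) and P (with P a j = P̄ (a+2) (j+2) for 1 ≤ a ≤ k, 1 ≤ j ≤ m) satisfy E·P = S. -/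
/-- Block computation for the forward direction of Lemma 2.  Here `Sbar` is the
bordered matrix of `S` (0-based indexing: row/column `0` is the all-true border
row/column, row/column `1` is the border row/column that is false except for its first
entry, and the bottom-right `n×m` block is `S`).  If `Sbar = Ē·P̄` with `Ē`, `P̄` in
normal form (row `0` of `Ē` all true; row `1` of `Ē` is `(true, false, …, false)`;
`Ē i 1 = false` for `i ≥ 2`; row `0` of `P̄` is `(true, false, …, false)`; column `0`
of `P̄` all true; `P̄ 1 1 = true`), then the bottom-right blocks of `Ē` and `P̄`
multiply to `S`. -/
theorem normal_form_blocks {n m k : ℕ} (S : Fin n → Fin m → Bool)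
    (Sbar : Fin (n + 2) → Fin (m + 2) → Bool)
    (hb1 : ∀ j, Sbar 0 j = true)
    (hb2 : ∀ i, Sbar i 0 = true)
    (hb3 : ∀ j : Fin (m + 2), 1 ≤ (j : ℕ) → Sbar 1 j = false)
    (hb4 : ∀ i : Fin (n + 2), 1 ≤ (i : ℕ) → Sbar i 1 = false)
    (hb5 : ∀ (i : Fin n) (j : Fin m), Sbar i.succ.succ j.succ.succ = S i j)
    (Ebar : Fin (n + 2) → Fin (k + 2) → Bool)
    (Pbar : Fin (k + 2) → Fin (m + 2) → Bool)
    (hfac : Sbar = bmul Ebar Pbar)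
    (hE1 : ∀ a, Ebar 0 a = true)
    (hE2 : Ebar 1 0 = true) (hE2' : ∀ a : Fin (k + 2), 1 ≤ (a : ℕ) → Ebar 1 a = false)
    (hE3 : ∀ i : Fin (n + 2), 2 ≤ (i : ℕ) → Ebar i 1 = false)
    (hP1 : Pbar 0 0 = true) (hP1' : ∀ j : Fin (m + 2), 1 ≤ (j : ℕ) → Pbar 0 j = false)
    (hP2 : ∀ a, Pbar a 0 = true)
    (hP3 : Pbar 1 1 = true) :
    bmul (fun (i : Fin n) (a : Fin k) => Ebar i.succ.succ a.succ.succ)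
         (fun (a : Fin k) (j : Fin m) => Pbar a.succ.succ j.succ.succ) = S := by
  funext i j
  have h := hb5 i j
  rw [hfac] at h
  rw [← h]
  simp only [bmul, decide_eq_decide]
  constructor
  · rintro ⟨a, hA, hB⟩
    exact ⟨a.succ.succ, hA, hB⟩
  · rintro ⟨a, hA, hB⟩
    induction a using Fin.cases with
    | zero =>
      have : Pbar 0 j.succ.succ = false := hP1' j.succ.succ (by simp [Fin.val_succ])
      simp [this] at hB
    | succ b =>
      induction b using Fin.cases with
      | zero =>
        have heq : (Fin.succ (0 : Fin (k+1))) = 1 := by ext; simp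
        rw [heq] at hA
        rw [hE3 i.succ.succ (by simp [Fin.val_succ])] at hA
        exact absurd hA (by simp)
      | succ c =>
        exact ⟨c, hA, hB⟩
end

section
/- (Correctness of the SBMOD-to-CRR reduction.) Let S be an n×n Boolean matrix and k a positive integer, and let S̄ be its (n+2)×(n+2) bordered matrix and k̄ = k+2. Then the following are equivalent: (i) there exist an (n+2)×k̄ Boolean matrix Ē and a k̄×(n+2) Boolean matrix P̄ with S̄ = Ē·P̄; (ii) there exist an (n+2)×k̄ Boolean matrix Ē and a k̄×(n+2) Boolean matrix P̄ with S̄ = Ē·P̄ and P̄·Ē equal to the k̄×k̄ all-true matrix. -/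
/-- Correctness of the SBMOD-to-CRR reduction.  Here `Sbar` is the bordered matrix of
the square matrix `S` (0-based indexing: row/column `0` is the all-true border
row/column, row/column `1` is the border row/column that is false except for its first
entry, and the bottom-right `n×n` block is `S`).  The bordered matrix `Sbar` admits a
Boolean factorization `Sbar = Ē·P̄` (with `Ē` of size `(n+2)×(k+2)` and `P̄` of size
`(k+2)×(n+2)`) iff it admits one where additionally `P̄·Ē` is the all-true
`(k+2)×(k+2)` matrix. -/
theorem sbmod_iff_crr {n k : ℕ} (hk : 0 < k) (S : Fin n → Fin n → Bool)
    (Sbar : Fin (n + 2) → Fin (n + 2) → Bool)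
    (hb1 : ∀ j, Sbar 0 j = true)
    (hb2 : ∀ i, Sbar i 0 = true)
    (hb3 : ∀ j : Fin (n + 2), 1 ≤ (j : ℕ) → Sbar 1 j = false)
    (hb4 : ∀ i : Fin (n + 2), 1 ≤ (i : ℕ) → Sbar i 1 = false)
    (hb5 : ∀ (i : Fin n) (j : Fin n), Sbar i.succ.succ j.succ.succ = S i j) :
    (∃ (Ebar : Fin (n + 2) → Fin (k + 2) → Bool)
       (Pbar : Fin (k + 2) → Fin (n + 2) → Bool), Sbar = bmul Ebar Pbar) ↔
    (∃ (Ebar : Fin (n + 2) → Fin (k + 2) → Bool)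
       (Pbar : Fin (k + 2) → Fin (n + 2) → Bool),
       Sbar = bmul Ebar Pbar ∧ bmul Pbar Ebar = fun _ _ => true) := by
  constructor
  · rintro ⟨E, P, hEP⟩
    have hS : ∀ i j, Sbar i j = true ↔ ∃ a, E i a = true ∧ P a j = true := by
      intro i j
      rw [hEP]
      simp [bmul]
    -- obtain a0
    have h10 : ∃ a, E 1 a = true ∧ P a 0 = true := (hS 1 0).mp (hb2 1)
    obtain ⟨a0, hEa0, hPa0⟩ := h10
    have hPa0' : ∀ j : Fin (n + 2), 1 ≤ (j : ℕ) → P a0 j = false := by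
      intro j hj
      by_contra hP
      have hP' : P a0 j = true := by
        cases hPj : P a0 j
        · exact absurd hPj hP
        · rfl
      have : Sbar 1 j = true := (hS 1 j).mpr ⟨a0, hEa0, hP'⟩
      rw [hb3 j hj] at this
      exact Bool.false_ne_true this
    -- obtain b0
    have h01 : ∃ a, E 0 a = true ∧ P a 1 = true := (hS 0 1).mp (hb1 1)
    obtain ⟨b0, hEb0, hPb0⟩ := h01
    have hEb0' : ∀ i : Fin (n + 2), 1 ≤ (i : ℕ) → E i b0 = false := by
      intro i hi
      by_contra hE
      have hE' : E i b0 = true := by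
        cases hEi : E i b0
        · exact absurd hEi hE
        · rfl
      have : Sbar i 1 = true := (hS i 1).mpr ⟨b0, hE', hPb0⟩
      rw [hb4 i hi] at this
      exact Bool.false_ne_true this
    have hab : a0 ≠ b0 := by
      intro h
      have h1 : P a0 (1 : Fin (n + 2)) = false := hPa0' 1 (by simp)
      rw [h, hPb0] at h1
      exact Bool.noConfusion h1
    -- the new factorization
    set E' : Fin (n + 2) → Fin (k + 2) → Bool := fun i a =>
      if a = a0 then true
      else if a = b0 then decide (i = 0)
      else if i = 0 then true
      else if i = 1 then false
      else E i a with hE'def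
    set P' : Fin (k + 2) → Fin (n + 2) → Bool := fun a j =>
      if a = a0 then decide (j = 0)
      else if a = b0 then true
      else if j = 0 then true
      else if j = 1 then false
      else P a j with hP'def
    have hE'0 : ∀ b, E' 0 b = true := by
      intro b
      simp only [hE'def]
      split_ifs <;> simp_all
    have hP'0 : ∀ a, P' a 0 = true := by
      intro a
      simp only [hP'def]
      split_ifs <;> simp_all
    refine ⟨E', P', ?_, ?_⟩
    · funext i j
      -- case analysis on i and j
      by_cases hj0 : j = 0
      · subst hj0
        rw [hb2 i]
        symm
        simp only [bmul, decide_eq_true_eq]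
        exact ⟨a0, by simp [hE'def], hP'0 a0⟩
      · by_cases hi0 : i = 0
        · subst hi0
          rw [hb1 j]
          symm
          simp only [bmul, decide_eq_true_eq]
          refine ⟨b0, hE'0 b0, ?_⟩
          simp [hP'def, Ne.symm hab]
        · -- i ≠ 0, j ≠ 0
          have hj1 : 1 ≤ (j : ℕ) := by
            have : (j : ℕ) ≠ 0 := fun h => hj0 (Fin.ext (by simp [h]))
            omega
          have hi1 : 1 ≤ (i : ℕ) := by
            have : (i : ℕ) ≠ 0 := fun h => hi0 (Fin.ext (by simp [h]))
            omega
          by_cases hi1' : i = 1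
          · subst hi1'
            rw [hb3 j hj1]
            symm
            simp only [bmul, decide_eq_false_iff_not, not_exists]
            rintro a ⟨hEa, hPa⟩
            simp only [hE'def] at hEa
            simp only [hP'def] at hPa
            split_ifs at hEa hPa with h1 h2 <;> simp_all
          · by_cases hj1' : j = 1
            · subst hj1'
              rw [hb4 i hi1]
              symm
              simp only [bmul, decide_eq_false_iff_not, not_exists]
              rintro a ⟨hEa, hPa⟩
              simp only [hE'def] at hEa
              simp only [hP'def] at hPa
              split_ifs at hEa hPa with h1 h2 <;> simp_all
            · -- both ≥ 2
              rw [hEP]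
              show bmul E P i j = bmul E' P' i j
              simp only [bmul, decide_eq_decide]
              constructor
              · rintro ⟨a, hEa, hPa⟩
                have ha0 : a ≠ a0 := by
                  intro h
                  rw [h, hPa0' j hj1] at hPa
                  exact Bool.false_ne_true hPa
                have hb0 : a ≠ b0 := by
                  intro h
                  rw [h, hEb0' i hi1] at hEa
                  exact Bool.false_ne_true hEa
                refine ⟨a, ?_, ?_⟩
                · simp [hE'def, ha0, hb0, hi0, hi1', hEa]
                · simp [hP'def, ha0, hb0, hj0, hj1', hPa]
              · rintro ⟨a, hEa, hPa⟩
                simp only [hE'def] at hEa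
                simp only [hP'def] at hPa
                split_ifs at hEa hPa with h1 h2 <;> simp_all
                exact ⟨a, hEa, hPa⟩
    · funext a b
      simp only [bmul, decide_eq_true_eq]
      exact ⟨0, hP'0 a, hE'0 b⟩
  · rintro ⟨E, P, hEP, _⟩
    exact ⟨E, P, hEP⟩
end

section
/- (Correctness of the full SB-to-CRR reduction.) Let S be an n×n Boolean matrix and k a positive integer, let S̄ be its (n+2)×(n+2) bordered matrix and k̄ = k+2. Then there exist an n×k Boolean matrix E and a k×n Boolean matrix P with S = E·P if and only if there exist an (n+2)×k̄ Boolean matrix Ē and a k̄×(n+2) Boolean matrix P̄ with S̄ = Ē·P̄ and P̄·Ē equal to the k̄×k̄ all-true matrix. -/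
def ebar {n k : ℕ} (E : Fin n → Fin k → Bool) : Fin (n + 2) → Fin (k + 2) → Bool :=
  fun i a => match i, a with
  | ⟨0, _⟩, _ => true
  | ⟨1, _⟩, ⟨0, _⟩ => true
  | ⟨1, _⟩, _ => false
  | ⟨_+2, _⟩, ⟨0, _⟩ => true
  | ⟨_+2, _⟩, ⟨1, _⟩ => false
  | ⟨i+2, hi⟩, ⟨a+2, ha⟩ => E ⟨i, by omega⟩ ⟨a, by omega⟩

def pbar {n k : ℕ} (P : Fin k → Fin n → Bool) : Fin (k + 2) → Fin (n + 2) → Bool :=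
  fun a j => match a, j with
  | _, ⟨0, _⟩ => true
  | ⟨0, _⟩, _ => false
  | ⟨1, _⟩, _ => true
  | ⟨_+2, _⟩, ⟨1, _⟩ => false
  | ⟨a+2, ha⟩, ⟨j+2, hj⟩ => P ⟨a, by omega⟩ ⟨j, by omega⟩

/-- Correctness of the full SB-to-CRR reduction.  Here `Sbar` is the bordered matrix
of the square matrix `S` (0-based indexing: row/column `0` is the all-true border
row/column, row/column `1` is the border row/column that is false except for its first
entry, and the bottom-right `n×n` block is `S`).  The matrix `S` admits a Boolean
factorization `S = E·P` into an `n×k` and a `k×n` matrix iff there exist an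
`(n+2)×(k+2)` matrix `Ē` and a `(k+2)×(n+2)` matrix `P̄` with `Sbar = Ē·P̄` and `P̄·Ē`
equal to the all-true `(k+2)×(k+2)` matrix. -/
theorem sb_iff_crr {n k : ℕ} (hk : 0 < k) (S : Fin n → Fin n → Bool)
    (Sbar : Fin (n + 2) → Fin (n + 2) → Bool)
    (hb1 : ∀ j, Sbar 0 j = true)
    (hb2 : ∀ i, Sbar i 0 = true)
    (hb3 : ∀ j : Fin (n + 2), 1 ≤ (j : ℕ) → Sbar 1 j = false)
    (hb4 : ∀ i : Fin (n + 2), 1 ≤ (i : ℕ) → Sbar i 1 = false)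
    (hb5 : ∀ (i : Fin n) (j : Fin n), Sbar i.succ.succ j.succ.succ = S i j) :
    (∃ (E : Fin n → Fin k → Bool) (P : Fin k → Fin n → Bool), S = bmul E P) ↔
    (∃ (Ebar : Fin (n + 2) → Fin (k + 2) → Bool)
       (Pbar : Fin (k + 2) → Fin (n + 2) → Bool),
       Sbar = bmul Ebar Pbar ∧ bmul Pbar Ebar = fun _ _ => true) := by
  constructor
  · rintro ⟨E, P, hS⟩
    refine ⟨ebar E, pbar P, ?_, ?_⟩
    · funext i j
      obtain ⟨iv, hi⟩ := i
      obtain ⟨jv, hj⟩ := j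
      match iv, jv with
      | 0, jv =>
        have h0 : (⟨0, hi⟩ : Fin (n+2)) = 0 := rfl
        rw [h0, hb1]
        symm
        simp only [bmul, decide_eq_true_eq]
        exact ⟨⟨1, by omega⟩, rfl, by
          match jv, hj with
          | 0, hj => rfl
          | 1, hj => rfl
          | j+2, hj => rfl⟩
      | 1, 0 =>
        have h0 : (⟨0, hj⟩ : Fin (n+2)) = 0 := rfl
        rw [h0, hb2]
        symm
        simp only [bmul, decide_eq_true_eq]
        exact ⟨⟨0, by omega⟩, rfl, rfl⟩
      | 1, jv+1 =>
        have h1 : (⟨1, hi⟩ : Fin (n+2)) = 1 := rfl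
        rw [h1, hb3 _ (by simp)]
        symm
        simp only [bmul, decide_eq_false_iff_not, not_exists, not_and]
        rintro ⟨av, ha⟩ hE hP
        match av, ha with
        | 0, ha =>
          match jv with
          | 0 => exact Bool.false_ne_true hP
          | j+1 => exact Bool.false_ne_true hP
        | a+1, ha => exact Bool.false_ne_true hE
      | iv+2, 0 =>
        have h0 : (⟨0, hj⟩ : Fin (n+2)) = 0 := rfl
        rw [h0, hb2]
        symm
        simp only [bmul, decide_eq_true_eq]
        exact ⟨⟨0, by omega⟩, rfl, rfl⟩
      | iv+2, 1 =>
        have h1 : (⟨1, hj⟩ : Fin (n+2)) = 1 := rfl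
        rw [h1, hb4 _ (by simp)]
        symm
        simp only [bmul, decide_eq_false_iff_not, not_exists, not_and]
        rintro ⟨av, ha⟩ hE hP
        match av, ha with
        | 0, ha => exact Bool.false_ne_true hP
        | 1, ha => exact Bool.false_ne_true hE
        | a+2, ha => exact Bool.false_ne_true hP
      | iv+2, jv+2 =>
        have hii : iv < n := by omega
        have hjj : jv < n := by omega
        have hss : (⟨iv+2, hi⟩ : Fin (n+2)) = (⟨iv, hii⟩ : Fin n).succ.succ := rfl
        have hss' : (⟨jv+2, hj⟩ : Fin (n+2)) = (⟨jv, hjj⟩ : Fin n).succ.succ := rfl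
        rw [hss, hss', hb5, hS]
        simp only [bmul, decide_eq_decide]
        constructor
        · rintro ⟨a, hE, hP⟩
          exact ⟨⟨(a : ℕ) + 2, by omega⟩, by
            obtain ⟨av, hav⟩ := a
            exact ⟨hE, hP⟩⟩
        · rintro ⟨⟨av, ha⟩, hE, hP⟩
          match av, ha with
          | 0, ha => exact absurd hP Bool.false_ne_true
          | 1, ha => exact absurd hE Bool.false_ne_true
          | a+2, ha => exact ⟨⟨a, by omega⟩, hE, hP⟩
    · funext a b
      simp only [bmul, decide_eq_true_eq]
      refine ⟨⟨0, by omega⟩, ?_, rfl⟩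
      obtain ⟨av, ha⟩ := a
      match av, ha with
      | 0, ha => rfl
      | 1, ha => rfl
      | a+2, ha => rfl
  · rintro ⟨Eb, Pb, hS, hall⟩
    -- extract a0 with Eb 1 a0 = true
    have h10 : bmul Eb Pb 1 0 = true := by rw [← hS]; exact hb2 1
    simp only [bmul, decide_eq_true_eq] at h10
    obtain ⟨a0, ha0, -⟩ := h10
    have h01 : bmul Eb Pb 0 1 = true := by rw [← hS]; exact hb1 1
    simp only [bmul, decide_eq_true_eq] at h01
    obtain ⟨b0, -, hb0⟩ := h01
    have h11 : bmul Eb Pb 1 1 = false := by rw [← hS]; exact hb3 1 (by simp)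
    simp only [bmul, decide_eq_false_iff_not, not_exists, not_and] at h11
    have hne : a0 ≠ b0 := by
      intro h; exact h11 a0 ha0 (h ▸ hb0)
    -- key vanishing lemmas
    have hA : ∀ a, Eb 1 a = true → ∀ j : Fin n, Pb a j.succ.succ = false := by
      intro a haE j
      have h : bmul Eb Pb 1 j.succ.succ = false := by
        rw [← hS]; exact hb3 _ (by simp [Fin.succ])
      simp only [bmul, decide_eq_false_iff_not, not_exists, not_and] at h
      exact Bool.eq_false_iff.mpr (h a haE)
    have hB : ∀ a, Pb a 1 = true → ∀ i : Fin n, Eb i.succ.succ a = false := by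
      intro a haP i
      have h : bmul Eb Pb i.succ.succ 1 = false := by
        rw [← hS]; exact hb4 _ (by simp [Fin.succ])
      simp only [bmul, decide_eq_false_iff_not, not_exists, not_and] at h
      exact Bool.eq_false_iff.mpr (fun hc => h a hc haP)
    -- the set of "useful" indices
    set T : Finset (Fin (k + 2)) := (Finset.univ.erase a0).erase b0 with hTdef
    have hb0mem : b0 ∈ Finset.univ.erase a0 := Finset.mem_erase.mpr ⟨Ne.symm hne, Finset.mem_univ _⟩
    have hT : T.card = k := by
      rw [hTdef, Finset.card_erase_of_mem hb0mem, Finset.card_erase_of_mem (Finset.mem_univ _)]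
      simp
    let f : Fin k → Fin (k + 2) := fun c => (T.equivFin.symm (Fin.cast hT.symm c) : T)
    have hfT : ∀ c, f c ∈ T := fun c => (T.equivFin.symm (Fin.cast hT.symm c)).2
    have hsurj : ∀ a ∈ T, ∃ c, f c = a := by
      intro a ha
      refine ⟨Fin.cast hT (T.equivFin ⟨a, ha⟩), ?_⟩
      simp [f]
    refine ⟨fun i c => Eb i.succ.succ (f c), fun c j => Pb (f c) j.succ.succ, ?_⟩
    funext i j
    have h := (hb5 i j).symm
    rw [hS] at h
    rw [h]
    simp only [bmul, decide_eq_decide]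
    constructor
    · rintro ⟨a, hE, hP⟩
      have haT : a ∈ T := by
        rw [hTdef]
        refine Finset.mem_erase.mpr ⟨?_, Finset.mem_erase.mpr ⟨?_, Finset.mem_univ _⟩⟩
        · intro h'; subst h'
          exact absurd hE (by rw [hB a hb0 i]; exact Bool.false_ne_true)
        · intro h'; subst h'
          exact absurd hP (by rw [hA a ha0 j]; exact Bool.false_ne_true)
      obtain ⟨c, hc⟩ := hsurj a haT
      exact ⟨c, by rw [hc]; exact hE, by rw [hc]; exact hP⟩
    · rintro ⟨c, hE, hP⟩
      exact ⟨f c, hE, hP⟩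
end

section
/- (Non-uniqueness of hypergraph reconstruction from S- and R-graphs.) Define the following Boolean matrices. E₁ : 4×2 with rows (true,true), (true,true), (false,false), (false,false); P₁ : 2×4 with rows (false,false,true,false), (false,false,false,true); E₂ : 4×2 with rows (true,false), (false,true), (false,false), (false,false); P₂ : 2×4 with rows (false,false,true,true), (false,false,true,true). Then (E₁, P₁) ≠ (E₂, P₂), yet E₁·P₁ = E₂·P₂ and P₁·E₁ = P₂·E₂. In particular there exist two distinct pairs of Boolean incidence matrices (i.e., two distinct directed hypergraphs) having the same species graph S = E·P and the same reaction graph R = P·E. -/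
/-- Reactant incidence matrix of the first hypergraph. -/
def E₁ : Fin 4 → Fin 2 → Bool :=
  ![![true, true], ![true, true], ![false, false], ![false, false]]

/-- Product incidence matrix of the first hypergraph. -/
def P₁ : Fin 2 → Fin 4 → Bool :=
  ![![false, false, true, false], ![false, false, false, true]]

/-- Reactant incidence matrix of the second hypergraph. -/
def E₂ : Fin 4 → Fin 2 → Bool :=
  ![![true, false], ![false, true], ![false, false], ![false, false]]

/-- Product incidence matrix of the second hypergraph. -/
def P₂ : Fin 2 → Fin 4 → Bool :=
  ![![false, false, true, true], ![false, false, true, true]]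

/-- Non-uniqueness of hypergraph reconstruction from S- and R-graphs: the two distinct
directed hypergraphs `(E₁, P₁)` and `(E₂, P₂)` have the same species graph `S = E·P`
and the same reaction graph `R = P·E`.  In particular, two distinct pairs of Boolean
incidence matrices with equal species graphs and equal reaction graphs exist. -/
theorem hypergraph_reconstruction_not_unique :
    ((E₁, P₁) ≠ (E₂, P₂) ∧ bmul E₁ P₁ = bmul E₂ P₂ ∧ bmul P₁ E₁ = bmul P₂ E₂) ∧
    ∃ (E E' : Fin 4 → Fin 2 → Bool) (P P' : Fin 2 → Fin 4 → Bool),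
      (E, P) ≠ (E', P') ∧ bmul E P = bmul E' P' ∧ bmul P E = bmul P' E' := by
  have hne : (E₁, P₁) ≠ (E₂, P₂) := by
    intro h
    have := congrFun (congrFun (congrArg Prod.fst h) 0) 1
    simp [E₁, E₂] at this
  have h1 : bmul E₁ P₁ = bmul E₂ P₂ := by
    funext i j
    fin_cases i <;> fin_cases j <;> decide
  have h2 : bmul P₁ E₁ = bmul P₂ E₂ := by
    funext i j
    fin_cases i <;> fin_cases j <;> decide
  exact ⟨⟨hne, h1, h2⟩, E₁, E₂, P₁, P₂, hne, h1, h2⟩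
end

section
/- (A non-reconstructible pair of S- and R-graphs.) Let S be the 8×8 Boolean matrix (rows/columns indexed by vertices 1,…,8, thought of as A,…,H) whose true entries are exactly at positions (1,4), (1,5), (2,5), (3,6), (3,7), (4,6), (4,7), (5,8), (7,8), (6,1), all other entries being false. Let R be the 4×4 Boolean matrix whose true entries are exactly at positions (1,2), (2,3), (2,4), (3,4), (3,1), all other entries being false. Then there exist no 8×4 Boolean matrix E and 4×8 Boolean matrix P with S = E·P and R = P·E. -/
/-- The species graph `S` (vertices `A,…,H` indexed `0,…,7`): true entries exactly at
(1-based) positions (1,4), (1,5), (2,5), (3,6), (3,7), (4,6), (4,7), (5,8), (7,8),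
(6,1). -/
def S : Fin 8 → Fin 8 → Bool :=
  ![![false, false, false, true , true , false, false, false],
    ![false, false, false, false, true , false, false, false],
    ![false, false, false, false, false, true , true , false],
    ![false, false, false, false, false, true , true , false],
    ![false, false, false, false, false, false, false, true ],
    ![true , false, false, false, false, false, false, false],
    ![false, false, false, false, false, false, false, true ],
    ![false, false, false, false, false, false, false, false]]

/-- The reaction graph `R` (reactions `R1,…,R4` indexed `0,…,3`): true entries exactly
at (1-based) positions (1,2), (2,3), (2,4), (3,4), (3,1). -/
def R : Fin 4 → Fin 4 → Bool :=
  ![![false, true , false, false],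
    ![false, false, true , true ],
    ![true , false, false, true ],
    ![false, false, false, false]]

/-- A non-reconstructible pair of S- and R-graphs: no directed hypergraph with 8
species and 4 reactions has `S` as its species graph and `R` as its reaction graph. -/
theorem no_hypergraph_realizes_S_R :
    ¬ ∃ (E : Fin 8 → Fin 4 → Bool) (P : Fin 4 → Fin 8 → Bool),
        S = bmul E P ∧ R = bmul P E := by
  rintro ⟨E, P, hS, -⟩
  have h : ∀ i j, S i j = true ↔ ∃ a, E i a = true ∧ P a j = true := by
    intro i j; rw [hS]; simp [bmul]
  obtain ⟨a1, hE1, hP1⟩ := (h 5 0).mp (by decide)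
  obtain ⟨a2, hE2, hP2⟩ := (h 0 3).mp (by decide)
  obtain ⟨a3, hE3, hP3⟩ := (h 1 4).mp (by decide)
  obtain ⟨a4, hE4, hP4⟩ := (h 2 5).mp (by decide)
  obtain ⟨a5, hE5, hP5⟩ := (h 4 7).mp (by decide)
  have ne : ∀ i j, S i j = false → ∀ a, E i a = true → P a j = true → False := by
    intro i j hf a hEa hPa
    have := (h i j).mpr ⟨a, hEa, hPa⟩
    rw [hf] at this
    exact Bool.false_ne_true this
  have d12 : a1 ≠ a2 := fun e => ne 5 3 (by decide) a1 hE1 (e ▸ hP2)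
  have d13 : a1 ≠ a3 := fun e => ne 5 4 (by decide) a1 hE1 (e ▸ hP3)
  have d14 : a1 ≠ a4 := fun e => ne 5 5 (by decide) a1 hE1 (e ▸ hP4)
  have d15 : a1 ≠ a5 := fun e => ne 5 7 (by decide) a1 hE1 (e ▸ hP5)
  have d23 : a2 ≠ a3 := fun e => ne 1 3 (by decide) a3 hE3 (e ▸ hP2)
  have d24 : a2 ≠ a4 := fun e => ne 0 5 (by decide) a2 hE2 (e ▸ hP4)
  have d25 : a2 ≠ a5 := fun e => ne 0 7 (by decide) a2 hE2 (e ▸ hP5)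
  have d34 : a3 ≠ a4 := fun e => ne 1 5 (by decide) a3 hE3 (e ▸ hP4)
  have d35 : a3 ≠ a5 := fun e => ne 1 7 (by decide) a3 hE3 (e ▸ hP5)
  have d45 : a4 ≠ a5 := fun e => ne 2 7 (by decide) a4 hE4 (e ▸ hP5)
  have v12 : a1.val ≠ a2.val := fun e => d12 (Fin.ext e)
  have v13 : a1.val ≠ a3.val := fun e => d13 (Fin.ext e)
  have v14 : a1.val ≠ a4.val := fun e => d14 (Fin.ext e)
  have v15 : a1.val ≠ a5.val := fun e => d15 (Fin.ext e)
  have v23 : a2.val ≠ a3.val := fun e => d23 (Fin.ext e)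
  have v24 : a2.val ≠ a4.val := fun e => d24 (Fin.ext e)
  have v25 : a2.val ≠ a5.val := fun e => d25 (Fin.ext e)
  have v34 : a3.val ≠ a4.val := fun e => d34 (Fin.ext e)
  have v35 : a3.val ≠ a5.val := fun e => d35 (Fin.ext e)
  have v45 : a4.val ≠ a5.val := fun e => d45 (Fin.ext e)
  have l1 := a1.isLt
  have l2 := a2.isLt
  have l3 := a3.isLt
  have l4 := a4.isLt
  have l5 := a5.isLt
  omega
end
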